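/- The uncentred base maximal operator ℬ^u is of weak type (1,1) with constant 2: for every f ∈ L^1(𝔗) and every α > 0, |{x : ℬ^u f(x) > α}| ≤ (2/α)‖f‖_1. -/

import Mathlib

open scoped ENNReal NNReal
open Set

/-- A locally finite tree presented via the data induced by a fixed geodesic ray `ω`:
a predecessor map `pred`, a height (Busemann) function `ht` increasing by one along `pred`,
finite successor sets, and connectedness (any two vertices have a common ancestor). -/
structure TreeData (V : Type*) where
  pred : V → V
  ht : V → ℤ
  ht_pred : ∀ x, ht (pred x) = ht x + 1
  fiber_finite : ∀ x, {y | pred y = x}.Finite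
  connected : ∀ x y, ∃ k l : ℕ, pred^[k] x = pred^[l] y

namespace TreeData

variable {V : Type*}

/-- The set of successors of a vertex. -/
def succs (t : TreeData V) (x : V) : Set V := {y | t.pred y = x}

/-- Every vertex has at least 3 neighbours, i.e. at least 2 successors. -/
def Thick (t : TreeData V) : Prop := ∀ x, 2 ≤ (t.succs x).ncard

/-- Homogeneous tree `𝔗_b`: every vertex has exactly `b+1` neighbours, i.e. `b` successors. -/
def Homog (t : TreeData V) (b : ℕ) : Prop := ∀ x, (t.succs x).ncard = b

/-- The triangle with vertex `x` and height `R`: all descendants of `x` within `R` generations. -/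
def tri (t : TreeData V) (x : V) (R : ℕ) : Set V := {y | ∃ j ≤ R, t.pred^[j] y = x}

/-- The base of the triangle with vertex `x` and height `R`: the `R`-fold successors of `x`. -/
def base (t : TreeData V) (x : V) (R : ℕ) : Set V := {y | t.pred^[R] y = x}

/-- The graph distance on the tree. -/
noncomputable def dist (t : TreeData V) (x y : V) : ℕ :=
  sInf {n | ∃ k l : ℕ, k + l = n ∧ t.pred^[k] x = t.pred^[l] y}

/-- Number of points of a set, as an element of `ℝ≥0∞` (counting measure). -/
noncomputable def esize (E : Set V) : ℝ≥0∞ := ∑' _ : E, (1 : ℝ≥0∞)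

/-- The average of `|f|` over a set, with respect to counting measure. -/
noncomputable def setAvg (t : TreeData V) (S : Set V) (f : V → ℝ) : ℝ≥0∞ :=
  (∑' y : S, (‖f y‖₊ : ℝ≥0∞)) / (S.ncard : ℝ≥0∞)

/-- The centred triangular maximal operator `𝒯`. -/
noncomputable def cmax (t : TreeData V) (f : V → ℝ) (x : V) : ℝ≥0∞ :=
  ⨆ R : ℕ, t.setAvg (t.tri x R) f

/-- The uncentred triangular maximal operator `𝒰`. -/
noncomputable def umax (t : TreeData V) (f : V → ℝ) (x : V) : ℝ≥0∞ :=
  ⨆ (v : V) (R : ℕ) (_ : x ∈ t.tri v R), t.setAvg (t.tri v R) f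

/-- The uncentred base maximal operator `ℬᵘ`. -/
noncomputable def ubmax (t : TreeData V) (f : V → ℝ) (x : V) : ℝ≥0∞ :=
  ⨆ (v : V) (R : ℕ) (_ : x ∈ t.tri v R), t.setAvg (t.base v R) f

/-- The modified triangle `T'_r(x) = T_r(x) ∪ {p^r(x)}`. -/
def mtri (t : TreeData V) (x : V) (r : ℕ) : Set V := t.tri x r ∪ {t.pred^[r] x}

/-- The modified centred triangular maximal operator `𝒯'`. -/
noncomputable def cmax' (t : TreeData V) (f : V → ℝ) (x : V) : ℝ≥0∞ :=
  ⨆ r : ℕ, t.setAvg (t.mtri x r) f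

/-- The modified uncentred triangular maximal operator `𝒰'`. -/
noncomputable def umax' (t : TreeData V) (f : V → ℝ) (x : V) : ℝ≥0∞ :=
  ⨆ (v : V) (r : ℕ) (_ : x ∈ t.mtri v r), t.setAvg (t.mtri v r) f

/-- The `ℓ^p` norm with respect to counting measure, for `p ∈ [1,∞]`. -/
noncomputable def eLp (p : ℝ≥0∞) (g : V → ℝ≥0∞) : ℝ≥0∞ :=
  if p = ∞ then ⨆ v, g v else (∑' v, g v ^ p.toReal) ^ (1 / p.toReal)

/-- `|f|` as an `ℝ≥0∞`-valued function. -/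
noncomputable def nn (f : V → ℝ) (x : V) : ℝ≥0∞ := (‖f x‖₊ : ℝ≥0∞)

/-- The point mass at `o`. -/
noncomputable def delta (o : V) : V → ℝ := ({o} : Set V).indicator fun _ => 1

end TreeData


/-!
Call a triangle heavy when the average of `|f|` over its base exceeds `α`. A base of height `R`
has at least `2^R` points, so for `f ∈ ℓ¹` heavy triangles have bounded height, and every heavy
triangle lies in a maximal one, obtained by raising the vertex while keeping the base level.
Two maximal heavy triangles with intersecting bases coincide, and since the levels of a triangle
at least double going down, a triangle has at most twice as many points as its base. Hence
`α |{ℬᵘf > α}| ≤ ∑ α |T| ≤ 2 ∑ α |β(T)| ≤ 2 ∑ ∑_{β(T)} |f| ≤ 2 ‖f‖₁`, summing over maximal heavy `T`.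
-/

namespace TreeData

variable {V : Type*}

theorem esize_mono {E F : Set V} (h : E ⊆ F) : esize E ≤ esize F :=
  ENNReal.tsum_mono_subtype (fun _ => 1) h

theorem esize_union_le (E F : Set V) : esize (E ∪ F) ≤ esize E + esize F :=
  ENNReal.tsum_union_le (fun _ => 1) E F

theorem esize_biUnion_le {ι : Type*} (s : Set ι) (E : ι → Set V) :
    esize (⋃ i ∈ s, E i) ≤ ∑' i : s, esize (E i) :=
  ENNReal.tsum_biUnion_le_tsum (fun _ => 1) s E

theorem esize_eq_ncard {E : Set V} (hE : E.Finite) : esize E = E.ncard := by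
  rw [esize, ENNReal.tsum_set_one, ← hE.cast_ncard_eq]
  rfl

theorem esize_singleton (v : V) : esize {v} = 1 := by
  simp [esize_eq_ncard (Set.finite_singleton v)]

variable (t : TreeData V)

theorem base_zero (v : V) : t.base v 0 = {v} := by
  ext
  simp [base]

theorem tri_zero (v : V) : t.tri v 0 = {v} := by
  ext
  simp [tri]

theorem base_succ (v : V) (R : ℕ) : t.base v (R + 1) = ⋃ z ∈ t.base v R, t.succs z := by
  ext
  simp [base, succs, Function.iterate_succ_apply]

theorem tri_succ (v : V) (R : ℕ) : t.tri v (R + 1) = t.tri v R ∪ t.base v (R + 1) := by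
  ext
  simp [tri, base, Nat.le_succ_iff, or_and_right, exists_or]

theorem base_finite (v : V) (R : ℕ) : (t.base v R).Finite := by
  induction R with
  | zero => simp [base_zero]
  | succ R ih =>
    rw [base_succ]
    exact ih.biUnion fun z _ => t.fiber_finite z

theorem pairwiseDisjoint_succs (S : Set V) : S.PairwiseDisjoint t.succs :=
  fun _ _ _ _ hzw => Set.disjoint_left.2 fun _ hz hw => hzw (hz.symm.trans hw)

variable {t}

theorem two_mul_esize_base_le (hthick : t.Thick) (v : V) (R : ℕ) :
    2 * esize (t.base v R) ≤ esize (t.base v (R + 1)) :=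
  calc 2 * esize (t.base v R) = ∑' _ : t.base v R, (2 : ℝ≥0∞) := by
        rw [esize, ← ENNReal.tsum_mul_left, mul_one]
    _ ≤ ∑' z : t.base v R, esize (t.succs z) := ENNReal.tsum_le_tsum fun z => by
        rw [esize_eq_ncard (E := t.succs z) (t.fiber_finite z)]
        exact_mod_cast hthick z
    _ = esize (t.base v (R + 1)) := by
        rw [base_succ, esize, ENNReal.tsum_biUnion' (f := fun _ => 1) (t.pairwiseDisjoint_succs _)]
        rfl

theorem two_pow_le_esize_base (hthick : t.Thick) (v : V) (R : ℕ) :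
    2 ^ R ≤ esize (t.base v R) := by
  induction R with
  | zero => simp [base_zero, esize_singleton]
  | succ R ih =>
    calc (2 : ℝ≥0∞) ^ (R + 1) = 2 * 2 ^ R := pow_succ' 2 R
      _ ≤ 2 * esize (t.base v R) := by gcongr
      _ ≤ esize (t.base v (R + 1)) := two_mul_esize_base_le hthick v R

theorem esize_tri_le (hthick : t.Thick) (v : V) (R : ℕ) :
    esize (t.tri v R) ≤ 2 * esize (t.base v R) := by
  induction R with
  | zero =>
    rw [tri_zero, base_zero, esize_singleton]
    norm_num
  | succ R ih =>
    calc esize (t.tri v (R + 1)) ≤ esize (t.tri v R) + esize (t.base v (R + 1)) := by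
          rw [tri_succ]
          exact esize_union_le _ _
      _ ≤ 2 * esize (t.base v R) + esize (t.base v (R + 1)) := by gcongr
      _ ≤ esize (t.base v (R + 1)) + esize (t.base v (R + 1)) := by
          gcongr
          exact two_mul_esize_base_le hthick v R
      _ = 2 * esize (t.base v (R + 1)) := (two_mul _).symm

variable (t)

theorem tri_subset_tri_iterate (v : V) (R k : ℕ) : t.tri v R ⊆ t.tri (t.pred^[k] v) (R + k) := by
  rintro y ⟨j, hj, rfl⟩
  exact ⟨k + j, by omega, Function.iterate_add_apply _ _ _ _⟩

theorem eq_iterate_of_base_inter_nonempty {v w : V} {R k : ℕ}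
    (h : (t.base v R ∩ t.base w (R + k)).Nonempty) : w = t.pred^[k] v := by
  obtain ⟨y, hv, hw⟩ := h
  exact Eq.symm hw ▸ by rw [add_comm, Function.iterate_add_apply, hv]

section Heavy

variable (f : V → ℝ) (α : ℝ≥0∞)

def Heavy (v : V) (R : ℕ) : Prop :=
  α * (t.base v R).ncard < ∑' y : t.base v R, nn f y

/-- A pair `(v, R)` stands for the triangle with vertex `v` and height `R`; the triangles
`(pred^[k] v, R + k)` are those containing it whose base contains its base. -/
def maximalHeavy : Set (V × ℕ) :=
  {p | t.Heavy f α p.1 p.2 ∧ ∀ k, 0 < k → ¬ t.Heavy f α (t.pred^[k] p.1) (p.2 + k)}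

variable {t f α}

theorem heavy_of_lt_setAvg {v : V} {R : ℕ} (h : α < t.setAvg (t.base v R) f) :
    t.Heavy f α v R :=
  ENNReal.mul_lt_of_lt_div h

theorem tsum_subtype_nn_le (S : Set V) : ∑' y : S, nn f y ≤ ∑' x, nn f x :=
  ENNReal.tsum_comp_le_tsum_of_injective Subtype.val_injective _

theorem exists_height_bound_of_heavy (hthick : t.Thick) (hf : ∑' x, nn f x ≠ ∞) (hα : α ≠ 0) :
    ∃ N : ℕ, ∀ v R, t.Heavy f α v R → R ≤ N := by
  obtain ⟨N, hN⟩ := ENNReal.exists_nat_gt (ENNReal.div_lt_top hf hα).ne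
  refine ⟨N, fun v R h => ?_⟩
  by_contra! hR
  have hbig : (2 : ℝ≥0∞) ^ R * α < ∑' x, nn f x :=
    calc (2 : ℝ≥0∞) ^ R * α ≤ α * (t.base v R).ncard := by
          rw [mul_comm, ← esize_eq_ncard (t.base_finite v R)]
          gcongr
          exact two_pow_le_esize_base hthick v R
      _ < ∑' y : t.base v R, nn f y := h
      _ ≤ ∑' x, nn f x := tsum_subtype_nn_le _
  have hNR : (N : ℝ≥0∞) < 2 ^ R := by
    exact_mod_cast N.lt_two_pow_self.trans_le (Nat.pow_le_pow_right two_pos hR.le)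
  exact (hN.trans hNR).not_gt ((ENNReal.lt_div_iff_mul_lt (.inl hα) (.inr (by positivity))).2 hbig)

theorem exists_iterate_mem_maximalHeavy (hthick : t.Thick) (hf : ∑' x, nn f x ≠ ∞)
    (hα : α ≠ 0) {v : V} {R : ℕ} (h : t.Heavy f α v R) :
    ∃ k, (t.pred^[k] v, R + k) ∈ t.maximalHeavy f α := by
  classical
  obtain ⟨N, hN⟩ := exists_height_bound_of_heavy hthick hf hα
  let P k := t.Heavy f α (t.pred^[k] v) (R + k)
  refine ⟨Nat.findGreatest P N, Nat.findGreatest_spec (P := P) (m := 0) (Nat.zero_le N) h,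
    fun j hj hheavy => ?_⟩
  rw [← Function.iterate_add_apply, add_assoc, add_comm j] at hheavy
  exact Nat.findGreatest_is_greatest (P := P) (n := N) (by omega) (by have := hN _ _ hheavy; omega) hheavy

theorem eq_of_mem_maximalHeavy_of_base_inter_nonempty {v w : V} {R S : ℕ}
    (hv : (v, R) ∈ t.maximalHeavy f α) (hw : (w, S) ∈ t.maximalHeavy f α) (hRS : R ≤ S)
    (h : (t.base v R ∩ t.base w S).Nonempty) : (v, R) = (w, S) := by
  obtain ⟨k, rfl⟩ := Nat.exists_eq_add_of_le hRS
  obtain rfl := t.eq_iterate_of_base_inter_nonempty h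
  rcases Nat.eq_zero_or_pos k with rfl | hk
  · rfl
  · exact absurd hw.1 (hv.2 k hk)

theorem pairwiseDisjoint_base_maximalHeavy :
    (t.maximalHeavy f α).PairwiseDisjoint fun p => t.base p.1 p.2 := by
  rintro ⟨v, R⟩ hv ⟨w, S⟩ hw hne
  rw [Function.onFun, Set.disjoint_iff_inter_eq_empty, ← Set.not_nonempty_iff_eq_empty]
  intro h
  rcases le_total R S with hRS | hSR
  · exact hne (eq_of_mem_maximalHeavy_of_base_inter_nonempty hv hw hRS h)
  · rw [Set.inter_comm] at h
    exact hne (eq_of_mem_maximalHeavy_of_base_inter_nonempty hw hv hSR h).symm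

theorem setOf_lt_ubmax_subset_biUnion_tri (hthick : t.Thick) (hf : ∑' x, nn f x ≠ ∞) (hα : α ≠ 0) :
    {x | α < t.ubmax f x} ⊆ ⋃ p ∈ t.maximalHeavy f α, t.tri p.1 p.2 := by
  intro x hx
  simp only [Set.mem_ofPred_eq, ubmax, lt_iSup_iff] at hx
  obtain ⟨v, R, hx, havg⟩ := hx
  obtain ⟨k, hk⟩ := exists_iterate_mem_maximalHeavy hthick hf hα (heavy_of_lt_setAvg havg)
  exact Set.mem_biUnion hk (t.tri_subset_tri_iterate v R k hx)

theorem mul_esize_tri_le_of_heavy (hthick : t.Thick) {v : V} {R : ℕ} (h : t.Heavy f α v R) :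
    α * esize (t.tri v R) ≤ 2 * ∑' y : t.base v R, nn f y :=
  calc α * esize (t.tri v R) ≤ α * (2 * esize (t.base v R)) := by
        gcongr
        exact esize_tri_le hthick v R
    _ = 2 * (α * (t.base v R).ncard) := by
        rw [esize_eq_ncard (t.base_finite v R)]
        ring
    _ ≤ 2 * ∑' y : t.base v R, nn f y := by
        gcongr
        exact h.le

theorem mul_esize_setOf_lt_ubmax_le (hthick : t.Thick) (hf : ∑' x, nn f x ≠ ∞) (hα : α ≠ 0) :
    α * esize {x | α < t.ubmax f x} ≤ 2 * ∑' x, nn f x := by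
  set M := t.maximalHeavy f α
  calc α * esize {x | α < t.ubmax f x}
      ≤ α * ∑' p : M, esize (t.tri p.1.1 p.1.2) := by
        gcongr
        exact (esize_mono (setOf_lt_ubmax_subset_biUnion_tri hthick hf hα)).trans (esize_biUnion_le _ _)
    _ = ∑' p : M, α * esize (t.tri p.1.1 p.1.2) := ENNReal.tsum_mul_left.symm
    _ ≤ ∑' p : M, 2 * ∑' y : t.base p.1.1 p.1.2, nn f y :=
        ENNReal.tsum_le_tsum fun p => mul_esize_tri_le_of_heavy hthick p.2.1
    _ = 2 * ∑' y : ⋃ p ∈ M, t.base p.1 p.2, nn f y := by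
        rw [ENNReal.tsum_mul_left, ENNReal.tsum_biUnion' pairwiseDisjoint_base_maximalHeavy]
    _ ≤ 2 * ∑' x, nn f x := by
        gcongr
        exact tsum_subtype_nn_le _

end Heavy

end TreeData

/-- The uncentred base maximal operator `ℬᵘ` is of weak type `(1,1)`
with constant `2`. -/
theorem stmt6 {V : Type*} (t : TreeData V) (hthick : t.Thick) (f : V → ℝ)
    (hf : ∑' x, TreeData.nn f x ≠ ∞) (α : ℝ≥0∞) (hα : 0 < α) :
    TreeData.esize {x | α < t.ubmax f x} ≤ 2 / α * ∑' x, TreeData.nn f x := by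
  rw [← ENNReal.mul_div_right_comm, ENNReal.le_div_iff_mul_le (.inl hα.ne')
    (.inr (ENNReal.mul_ne_top ENNReal.ofNat_ne_top hf)), mul_comm]
  exact TreeData.mul_esize_setOf_lt_ubmax_le hthick hf hα.ne'
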